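/- Let 0 < α < 2 and let f : ℝ → ℝ be a 2π-periodic C² function. Then for every x ∈ ℝ, f(x) · Λ^α f(x) = (1/2) Λ^α (f²)(x) + (1/2) I_α f(x). -/

import Mathlib

open MeasureTheory Real

/-- The constant `c_σ = Γ(1+σ) cos((1−σ)π/2) / π`. -/
noncomputable def cFrac (σ : ℝ) : ℝ :=
  Real.Gamma (1 + σ) * Real.cos ((1 - σ) * Real.pi / 2) / Real.pi

/-- The periodized kernel `K_σ(η) = ∑_{k∈ℤ} |η + 2kπ|^{-(1+σ)}`. -/
noncomputable def Kper (σ η : ℝ) : ℝ :=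
  ∑' k : ℤ, |η + 2 * (k : ℝ) * Real.pi| ^ (-(1 + σ))

/-- The fractional Laplacian `Λ^σ f` of a `2π`-periodic function, defined by
`Λ^σ f(x) = (c_σ/2) ∫_{-π}^{π} (2f(x) − f(x+η) − f(x−η)) K_σ(η) dη`. -/
noncomputable def fracLap (σ : ℝ) (f : ℝ → ℝ) (x : ℝ) : ℝ :=
  (cFrac σ / 2) *
    ∫ η in (-Real.pi)..Real.pi, (2 * f x - f (x + η) - f (x - η)) * Kper σ η

/-- `I_α f(x) = c_α ∫_{-π}^{π} (f(x) − f(x−η))² K_α(η) dη`. -/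
noncomputable def Ifrac (α : ℝ) (f : ℝ → ℝ) (x : ℝ) : ℝ :=
  cFrac α * ∫ η in (-Real.pi)..Real.pi, (f x - f (x - η)) ^ 2 * Kper α η

/-! With `a = f x`, `b = f (x + η)`, `c = f (x - η)` the integrands satisfy the algebraic identity
`2a(2a - b - c) = (2a² - b² - c²) + (a - b)² + (a - c)²`, and since `K_α` is even the two squares
integrate to the same value. The analytic content is integrability: each of the three integrands is
a `C²` function of `η` with a critical zero at `η = 0`, hence `O(η²)`, while on `[-π, π]` the kernel
is at most `|η|^{-(1+α)}` plus a constant, and `|η|^{1-α}` is integrable because `α < 2`. -/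

open Set

lemma Kper_nonneg (σ η : ℝ) : 0 ≤ Kper σ η :=
  tsum_nonneg fun _ => rpow_nonneg (abs_nonneg _) _

lemma measurable_Kper (σ : ℝ) : Measurable (Kper σ) :=
  Measurable.tsum fun _ => (measurable_id.add_const _).abs.pow_const _

lemma Kper_neg (σ η : ℝ) : Kper σ (-η) = Kper σ η := by
  rw [Kper, ← (Equiv.neg ℤ).tsum_eq]
  refine tsum_congr fun k => ?_
  rw [← abs_neg]
  simp only [Equiv.neg_apply, Int.cast_neg]
  ring_nf

lemma pi_mul_abs_le_abs_add_two_mul_pi {η : ℝ} (hη : |η| ≤ π) {k : ℤ} (hk : k ≠ 0) :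
    π * |(k : ℝ)| ≤ |η + 2 * k * π| := by
  have hk1 : (1 : ℝ) ≤ |(k : ℝ)| := by
    rw [← Int.cast_abs]; exact_mod_cast Int.one_le_abs hk
  have htri : |2 * k * π| ≤ |η + 2 * k * π| + |η| := by
    simpa using abs_sub (η + 2 * k * π) η
  rw [abs_mul, abs_mul, abs_two, abs_of_pos pi_pos] at htri
  nlinarith [pi_pos]

lemma exists_Kper_le {α : ℝ} (hα : 0 < α) :
    ∃ C, ∀ η, |η| ≤ π → Kper α η ≤ |η| ^ (-(1 + α)) + C := by
  have hsum : Summable fun k : ℤ => (π * |(k : ℝ)|) ^ (-(1 + α)) := by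
    simpa only [mul_rpow pi_pos.le (abs_nonneg _)] using
      (summable_abs_int_rpow (by linarith : 1 < 1 + α)).mul_left (π ^ (-(1 + α)))
  refine ⟨∑' k : ℤ, (π * |(k : ℝ)|) ^ (-(1 + α)), fun η hη => ?_⟩
  set b : ℤ → ℝ := fun k => (if k = 0 then |η| ^ (-(1 + α)) else 0) + (π * |(k : ℝ)|) ^ (-(1 + α))
  have hb : Summable b := (summable_of_ne_finset_zero (s := {0}) fun k hk => by simp_all).add hsum
  have hle : ∀ k : ℤ, |η + 2 * k * π| ^ (-(1 + α)) ≤ b k := by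
    intro k
    rcases eq_or_ne k 0 with rfl | hk
    · simpa [b] using rpow_nonneg (mul_nonneg pi_pos.le (abs_nonneg (0 : ℝ))) _
    · simpa [b, hk] using rpow_le_rpow_of_nonpos (by positivity)
        (pi_mul_abs_le_abs_add_two_mul_pi hη hk) (by linarith)
  calc Kper α η ≤ ∑' k, b k :=
        (hb.of_nonneg_of_le (fun _ => rpow_nonneg (abs_nonneg _) _) hle).tsum_le_tsum hle hb
    _ = |η| ^ (-(1 + α)) + ∑' k : ℤ, (π * |(k : ℝ)|) ^ (-(1 + α)) := by
        rw [Summable.tsum_add (summable_of_ne_finset_zero (s := {0}) fun k hk => by simp_all) hsum,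
          tsum_ite_eq]

lemma intervalIntegrable_abs_rpow {r : ℝ} (hr : -1 < r) (a b : ℝ) :
    IntervalIntegrable (fun x : ℝ => |x| ^ r) volume a b := by
  have hpos : ∀ c, 0 ≤ c → IntervalIntegrable (fun x : ℝ => |x| ^ r) volume 0 c := by
    intro c hc
    refine (intervalIntegral.intervalIntegrable_rpow' hr).congr_uIoo fun x hx => ?_
    rw [uIoo_of_le hc] at hx
    simp [abs_of_pos hx.1]
  have hall : ∀ c, IntervalIntegrable (fun x : ℝ => |x| ^ r) volume 0 c := by
    intro c
    rcases le_total 0 c with hc | hc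
    · exact hpos c hc
    · simpa using (IntervalIntegrable.iff_comp_neg).mp (hpos (-c) (by linarith))
  exact (hall a).symm.trans (hall b)

lemma intervalIntegrable_mul_Kper_of_abs_le {α : ℝ} (hα0 : 0 < α) (hα2 : α < 2)
    {g : ℝ → ℝ} (hg : Continuous g) {M : ℝ} (hM : ∀ η, |η| ≤ π → |g η| ≤ M * η ^ 2) :
    IntervalIntegrable (fun η => g η * Kper α η) volume (-π) π := by
  obtain ⟨C, hC⟩ := exists_Kper_le hα0
  have hdom : IntervalIntegrable (fun η : ℝ => M * |η| ^ (1 - α) + M * C * η ^ 2) volume (-π) π :=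
    ((intervalIntegrable_abs_rpow (by linarith) _ _).const_mul M).add
      ((continuous_const.mul (continuous_pow 2)).intervalIntegrable _ _)
  refine hdom.mono_fun' (hg.measurable.mul (measurable_Kper α)).aestronglyMeasurable ?_
  rw [uIoc_of_le (by linarith [pi_pos])]
  filter_upwards [ae_restrict_mem measurableSet_Ioc,
    ae_restrict_of_ae (compl_mem_ae_iff.mpr (volume_singleton (a := (0 : ℝ))))] with η hη hη0
  have hηπ : |η| ≤ π := abs_le.mpr ⟨hη.1.le, hη.2⟩
  have hpow : η ^ 2 * |η| ^ (-(1 + α)) = |η| ^ (1 - α) := by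
    rw [← sq_abs, ← rpow_natCast, ← rpow_add (abs_pos.mpr hη0)]
    congr 1; push_cast; ring
  calc ‖g η * Kper α η‖ = |g η| * Kper α η := by
        rw [norm_mul, norm_eq_abs, norm_eq_abs, abs_of_nonneg (Kper_nonneg α η)]
    _ ≤ M * η ^ 2 * (|η| ^ (-(1 + α)) + C) :=
        mul_le_mul (hM η hηπ) (hC η hηπ) (Kper_nonneg α η) ((abs_nonneg _).trans (hM η hηπ))
    _ = M * |η| ^ (1 - α) + M * C * η ^ 2 := by rw [← hpow]; ring

lemma deriv_zero_eq_zero_of_even {g : ℝ → ℝ} (hg : ∀ x, g (-x) = g x) : deriv g 0 = 0 := by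
  have h := deriv_comp_neg (f := g) (x := 0)
  simp only [hg, neg_zero] at h
  linarith

lemma exists_abs_sub_le_mul_sq {g : ℝ → ℝ} (hg : ContDiff ℝ 2 g) (hg0 : deriv g 0 = 0) (R : ℝ) :
    ∃ M, ∀ η, |η| ≤ R → |g η - g 0| ≤ M * η ^ 2 := by
  obtain ⟨K, hK⟩ := (contDiff_succ_iff_deriv.mp hg).2.2.locallyLipschitz.locallyLipschitzOn
    |>.exists_lipschitzOnWith_of_compact (isCompact_closedBall (0 : ℝ) R)
  refine ⟨K, fun η hη => ?_⟩
  have hbound : ∀ t ∈ uIcc 0 η, ‖deriv g t‖ ≤ K * |η| := by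
    intro t ht
    have htη : |t| ≤ |η| := by simpa using abs_sub_left_of_mem_uIcc ht
    have hR : 0 ≤ R := (abs_nonneg t).trans (htη.trans hη)
    have := hK.dist_le_mul t (by simpa using htη.trans hη) 0 (by simpa using hR)
    rw [hg0, dist_zero_right, dist_zero_right] at this
    exact this.trans (mul_le_mul_of_nonneg_left htη K.2)
  have := (convex_uIcc 0 η).norm_image_sub_le_of_norm_deriv_le
    (fun t _ => (hg.differentiable (by norm_num)).differentiableAt) hbound left_mem_uIcc right_mem_uIcc
  rw [norm_eq_abs, norm_eq_abs, sub_zero, mul_assoc, abs_mul_abs_self, ← sq] at this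
  exact this

lemma intervalIntegrable_mul_Kper {α : ℝ} (hα0 : 0 < α) (hα2 : α < 2) {g : ℝ → ℝ}
    (hg : ContDiff ℝ 2 g) (hg0 : g 0 = 0) (hg'0 : deriv g 0 = 0) :
    IntervalIntegrable (fun η => g η * Kper α η) volume (-π) π := by
  obtain ⟨M, hM⟩ := exists_abs_sub_le_mul_sq hg hg'0 π
  exact intervalIntegrable_mul_Kper_of_abs_le hα0 hα2 hg.continuous fun η hη => by
    simpa [hg0] using hM η hη

lemma intervalIntegrable_sq_sub_mul_Kper {α : ℝ} (hα0 : 0 < α) (hα2 : α < 2) {g : ℝ → ℝ}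
    (hg : ContDiff ℝ 2 g) :
    IntervalIntegrable (fun η => (g 0 - g η) ^ 2 * Kper α η) volume (-π) π :=
  intervalIntegrable_mul_Kper hα0 hα2 ((contDiff_const.sub hg).pow 2) (by simp)
    (IsLocalMin.deriv_eq_zero (Filter.Eventually.of_forall fun η => by simp [sq_nonneg]))

lemma intervalIntegrable_secondDiff_mul_Kper {α : ℝ} (hα0 : 0 < α) (hα2 : α < 2) {F : ℝ → ℝ}
    (hF : ContDiff ℝ 2 F) (x : ℝ) :
    IntervalIntegrable (fun η => (2 * F x - F (x + η) - F (x - η)) * Kper α η) volume (-π) π :=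
  intervalIntegrable_mul_Kper hα0 hα2 (by fun_prop) (by ring_nf)
    (deriv_zero_eq_zero_of_even fun η => by ring_nf)

lemma integral_comp_neg_mul_Kper (σ : ℝ) (g : ℝ → ℝ) :
    ∫ η in (-π)..π, g (-η) * Kper σ η = ∫ η in (-π)..π, g η * Kper σ η := by
  simpa [Kper_neg] using intervalIntegral.integral_comp_neg (a := -π) (b := π)
    fun η => g η * Kper σ η

theorem stmt10_general (α : ℝ) (hα0 : 0 < α) (hα2 : α < 2)
    (f : ℝ → ℝ) (hC2 : ContDiff ℝ 2 f) :
    ∀ x : ℝ, f x * fracLap α f x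
      = (1 / 2) * fracLap α (fun y => f y ^ 2) x + (1 / 2) * Ifrac α f x := by
  intro x
  have hsecond := intervalIntegrable_secondDiff_mul_Kper hα0 hα2 (hC2.pow 2) x
  have hminus := intervalIntegrable_sq_sub_mul_Kper hα0 hα2 (g := fun η => f (x - η)) (by fun_prop)
  have hplus := intervalIntegrable_sq_sub_mul_Kper hα0 hα2 (g := fun η => f (x + η)) (by fun_prop)
  simp only [sub_zero, add_zero] at hminus hplus
  have hsymm : ∫ η in (-π)..π, (f x - f (x + η)) ^ 2 * Kper α η
      = ∫ η in (-π)..π, (f x - f (x - η)) ^ 2 * Kper α η := by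
    simpa using integral_comp_neg_mul_Kper α fun η => (f x - f (x - η)) ^ 2
  have hpointwise : ∀ η, f x * ((2 * f x - f (x + η) - f (x - η)) * Kper α η)
      = 1 / 2 * ((2 * f x ^ 2 - f (x + η) ^ 2 - f (x - η) ^ 2) * Kper α η)
        + (1 / 2 * ((f x - f (x - η)) ^ 2 * Kper α η)
          + 1 / 2 * ((f x - f (x + η)) ^ 2 * Kper α η)) := fun η => by ring
  rw [fracLap, fracLap, Ifrac, mul_left_comm, ← intervalIntegral.integral_const_mul,
    funext hpointwise, intervalIntegral.integral_add (hsecond.const_mul _)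
      ((hminus.const_mul _).add (hplus.const_mul _)),
    intervalIntegral.integral_add (hminus.const_mul _) (hplus.const_mul _),
    intervalIntegral.integral_const_mul, intervalIntegral.integral_const_mul,
    intervalIntegral.integral_const_mul, hsymm]
  ring

theorem stmt10 (α : ℝ) (hα0 : 0 < α) (hα2 : α < 2)
    (f : ℝ → ℝ) (hC2 : ContDiff ℝ 2 f) (hper : Function.Periodic f (2 * Real.pi)) :
    ∀ x : ℝ, f x * fracLap α f x
      = (1 / 2) * fracLap α (fun y => f y ^ 2) x + (1 / 2) * Ifrac α f x :=
  stmt10_general α hα0 hα2 f hC2
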